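/- Let H ∈ ℝ^{n×n} be symmetric positive semidefinite, G, D, V ∈ ℝ^{n×m} with ‖D‖_0 ≤ k, ρ > 0, W = (H + ρI)^{-1}(G - V + ρD), and D⁺ = P_k(W + V/ρ). Then ‖D⁺ - D‖_F ≤ (2/ρ)(‖G - H D‖_F + ‖H V‖_F/ρ). -/

import Mathlib

/-!
Put `x = W + V/ρ`. The defining equation of `W` gives `(H + ρI)(x - D) = G - HD + HV/ρ`, and
positive semidefiniteness of `H` gives `⟪X, (H + ρI)X⟫_F ≥ ρ‖X‖_F²`, so by Cauchy–Schwarz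
`ρ‖x - D‖_F ≤ ‖G - HD‖_F + ‖HV‖_F/ρ`. Since `D` is itself `k`-sparse, optimality of `D⁺` gives
`‖D⁺ - x‖_F ≤ ‖D - x‖_F`, and the triangle inequality through `x` doubles the bound.
-/

open scoped Classical

/-- Frobenius norm of a real matrix. -/
noncomputable def frob {n m : ℕ} (A : Matrix (Fin n) (Fin m) ℝ) : ℝ :=
  Real.sqrt (∑ i, ∑ j, (A i j) ^ 2)

/-- Spectral norm (operator 2-norm, largest singular value) of a real matrix. -/
noncomputable def spec {n m : ℕ} (A : Matrix (Fin n) (Fin m) ℝ) : ℝ :=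
  ‖LinearMap.toContinuousLinearMap (Matrix.toEuclideanLin A)‖

/-- Number of nonzero entries of a matrix (the ℓ₀-"norm"). -/
noncomputable def l0 {n m : ℕ} (A : Matrix (Fin n) (Fin m) ℝ) : ℕ :=
  (Finset.univ.filter fun p : Fin n × Fin m => A p.1 p.2 ≠ 0).card

open Matrix

attribute [local instance] Matrix.frobeniusNormedAddCommGroup Matrix.frobeniusNormedSpace

namespace Matrix

variable {m n : Type*} [Fintype m] [Fintype n]

lemma frobenius_norm_eq_sqrt (A : Matrix m n ℝ) : ‖A‖ = √(∑ i, ∑ j, A i j ^ 2) := by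
  simp [frobenius_norm_def, Real.sqrt_eq_rpow, Real.norm_eq_abs, sq_abs]

lemma frobenius_norm_sq (A : Matrix m n ℝ) : ‖A‖ ^ 2 = ∑ i, ∑ j, A i j ^ 2 := by
  rw [frobenius_norm_eq_sqrt, Real.sq_sqrt (by positivity)]

lemma sum_sum_mul_le_frobenius_norm_mul (X Y : Matrix m n ℝ) :
    ∑ i, ∑ j, X i j * Y i j ≤ ‖X‖ * ‖Y‖ := by
  simpa only [frobenius_norm_eq_sqrt, Fintype.sum_prod_type] using
    Real.sum_mul_le_sqrt_mul_sqrt Finset.univ (fun p : m × n => X p.1 p.2) (fun p => Y p.1 p.2)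

lemma PosSemidef.sum_sum_mul_mul_nonneg {H : Matrix m m ℝ} (hH : H.PosSemidef)
    (X : Matrix m n ℝ) : 0 ≤ ∑ i, ∑ j, X i j * (H * X) i j := by
  have htrace := (hH.conjTranspose_mul_mul_same X).trace_nonneg
  rw [Matrix.mul_assoc] at htrace
  simp only [trace, diag, mul_apply (M := Xᴴ), conjTranspose_apply, star_trivial] at htrace
  rwa [Finset.sum_comm] at htrace

lemma PosSemidef.mul_frobenius_norm_le_add_smul_one_mul [DecidableEq m] {H : Matrix m m ℝ}
    (hH : H.PosSemidef) (ρ : ℝ) (X : Matrix m n ℝ) : ρ * ‖X‖ ≤ ‖(H + ρ • 1) * X‖ := by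
  have hinner : ρ * ‖X‖ ^ 2 ≤ ‖X‖ * ‖(H + ρ • 1) * X‖ :=
    calc ρ * ‖X‖ ^ 2 ≤ ∑ i, ∑ j, X i j * (H * X) i j + ρ * ‖X‖ ^ 2 :=
          le_add_of_nonneg_left (hH.sum_sum_mul_mul_nonneg X)
      _ = ∑ i, ∑ j, X i j * ((H + ρ • (1 : Matrix m m ℝ)) * X) i j := by
          simp only [frobenius_norm_sq, Finset.mul_sum, Matrix.add_mul, Matrix.smul_mul,
            Matrix.one_mul, add_apply, smul_apply, smul_eq_mul, mul_add, Finset.sum_add_distrib]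
          ring_nf
      _ ≤ ‖X‖ * ‖(H + ρ • 1) * X‖ := sum_sum_mul_le_frobenius_norm_mul X ((H + ρ • 1) * X)
  rcases (norm_nonneg X).eq_or_lt with hX | hX
  · simp [← hX]
  · nlinarith

end Matrix

lemma frob_eq_norm {n m : ℕ} (A : Matrix (Fin n) (Fin m) ℝ) : frob A = ‖A‖ :=
  (frobenius_norm_eq_sqrt A).symm

lemma norm_sub_le_two_mul_of_norm_sub_le {E : Type*} [SeminormedAddCommGroup E] {p x d : E}
    (h : ‖p - x‖ ≤ ‖d - x‖) : ‖p - d‖ ≤ 2 * ‖x - d‖ := by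
  have := norm_sub_le_norm_sub_add_norm_sub p x d
  rw [norm_sub_rev d x] at h
  linarith

theorem alps_lemma1_D_bound_general {n m k : ℕ} (H : Matrix (Fin n) (Fin n) ℝ)
    (hH : H.PosSemidef) (G D V : Matrix (Fin n) (Fin m) ℝ)
    (ρ : ℝ) (hρ : 0 < ρ) (hD : l0 D ≤ k)
    (W Dplus : Matrix (Fin n) (Fin m) ℝ)
    (hWdef : W = (H + ρ • 1)⁻¹ * (G - V + ρ • D))
    (hDplus_best : ∀ B : Matrix (Fin n) (Fin m) ℝ, l0 B ≤ k →
      frob (Dplus - (W + ρ⁻¹ • V)) ≤ frob (B - (W + ρ⁻¹ • V))) :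
    frob (Dplus - D) ≤ (2 / ρ) * (frob (G - H * D) + frob (H * V) / ρ) := by
  simp only [frob_eq_norm] at hDplus_best ⊢
  have hunit : IsUnit (H + ρ • 1).det :=
    (isUnit_iff_isUnit_det _).mp (PosDef.posSemidef_add hH (PosDef.one.smul hρ)).isUnit
  have hresidual : (H + ρ • 1) * (W + ρ⁻¹ • V - D) = G - H * D + ρ⁻¹ • (H * V) := by
    rw [hWdef, Matrix.mul_sub, Matrix.mul_add, mul_nonsing_inv_cancel_left _ _ hunit]
    simp only [Matrix.add_mul, Matrix.mul_smul, Matrix.smul_mul, Matrix.one_mul, smul_add,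
      smul_smul, inv_mul_cancel₀ hρ.ne', one_smul]
    abel
  have hcenter : ρ * ‖W + ρ⁻¹ • V - D‖ ≤ ‖G - H * D‖ + ‖H * V‖ / ρ :=
    calc ρ * ‖W + ρ⁻¹ • V - D‖ ≤ ‖G - H * D + ρ⁻¹ • (H * V)‖ :=
          hresidual ▸ hH.mul_frobenius_norm_le_add_smul_one_mul ρ _
      _ ≤ ‖G - H * D‖ + ‖H * V‖ / ρ := by
          grw [norm_add_le, norm_smul, Real.norm_of_nonneg (inv_nonneg.mpr hρ.le), inv_mul_eq_div]
  have hproj := norm_sub_le_two_mul_of_norm_sub_le (hDplus_best D hD)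
  rw [div_mul_eq_mul_div, le_div_iff₀ hρ]
  linarith [mul_le_mul_of_nonneg_right hproj hρ.le]

/-- second conclusion of Lemma 1 of the ALPS paper. -/
theorem alps_lemma1_D_bound {n m k : ℕ} (H : Matrix (Fin n) (Fin n) ℝ)
    (hH : H.PosSemidef) (G D V : Matrix (Fin n) (Fin m) ℝ)
    (ρ : ℝ) (hρ : 0 < ρ) (hD : l0 D ≤ k)
    (W Dplus : Matrix (Fin n) (Fin m) ℝ)
    (hWdef : W = (H + ρ • 1)⁻¹ * (G - V + ρ • D))
    (hDplus_sparse : l0 Dplus ≤ k)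
    (hDplus_best : ∀ B : Matrix (Fin n) (Fin m) ℝ, l0 B ≤ k →
      frob (Dplus - (W + ρ⁻¹ • V)) ≤ frob (B - (W + ρ⁻¹ • V))) :
    frob (Dplus - D) ≤ (2 / ρ) * (frob (G - H * D) + frob (H * V) / ρ) :=
  alps_lemma1_D_bound_general H hH G D V ρ hρ hD W Dplus hWdef hDplus_best
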